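/- Let h ≥ 1, d ≥ 3, P = P_{h,d}, and n ≥ 3 with 0 ≤ k ≤ n. Suppose α = (k, α_2, …, α_d) ∈ nP ∩ ℤ^d lies in the interior relative to all facets (α is in none of the sets nF for F a facet of P) and satisfies α_d ≥ 5 and -(d-4)α_i + Σ_{j≠i, 2≤j≤d-1} α_j - α_d ≤ n-6 for all i = 2,…,d-1. Then β = α - u_8 = (k-1, α_2, …, α_{d-1}, α_d - 5) belongs to (n-1)P ∩ ℤ^d. -/

import Mathlib

open Finset Pointwise

noncomputable section

/-- Cast an integer lattice point to a real point. -/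
def castPt {d : ℕ} (a : Fin d → ℤ) : Fin d → ℝ := fun i => (a i : ℝ)

/-- The cone of nonnegative real combinations of a set of vectors. -/
def coneOf {d : ℕ} (A : Set (Fin d → ℝ)) : Set (Fin d → ℝ) :=
  {x | ∃ (n : ℕ) (c : Fin n → ℝ) (v : Fin n → (Fin d → ℝ)),
    (∀ i, 0 ≤ c i) ∧ (∀ i, v i ∈ A) ∧ x = ∑ i, c i • v i}

/-- `A_P = {(α,1) : α ∈ P ∩ ℤ^d} ⊂ ℤ^(d+1)`. -/
def APts {d : ℕ} (P : Set (Fin d → ℝ)) : Set (Fin (d+1) → ℤ) :=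
  {b | b (Fin.last d) = 1 ∧ castPt (fun i : Fin d => b i.castSucc) ∈ P}

/-- The `k`-th standard unit vector (0-indexed coordinate `k`). -/
def eV (d : ℕ) (k : ℕ) : Fin d → ℤ := fun i => if i.val = k then 1 else 0

/-- `e_2 + ⋯ + e_{d-1}` (coordinates with 0 < index < d-1). -/
def eMid (d : ℕ) : Fin d → ℤ := fun i => if 0 < i.val ∧ i.val < d - 1 then 1 else 0

/-- `e_d`, the last unit vector. -/
def eD (d : ℕ) : Fin d → ℤ := eV d (d - 1)

/-- `e_1`, the first unit vector. -/
def eOne (d : ℕ) : Fin d → ℤ := eV d 0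

/-- The vertex set of the polytope `P_{h,d}`. -/
def PhdVerts (h d : ℕ) : Set (Fin d → ℤ) :=
  ({0, eD d, eMid d, (h : ℤ) • (eMid d + eD d), ((h : ℤ) - 1) • eMid d + (h : ℤ) • eD d,
    (h : ℤ) • eMid d + ((h : ℤ) - 1) • eD d, eOne d + (4 : ℤ) • eD d, eOne d + (5 : ℤ) • eD d,
    eOne d + eMid d, eOne d + eMid d + eD d} : Set (Fin d → ℤ))
  ∪ {x | ∃ i : Fin d, 0 < i.val ∧ i.val < d - 1 ∧ (x = eV d i.val ∨ x = eV d i.val + eD d)}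

/-- The polytope `P_{h,d} ⊂ ℝ^d`. -/
def Phd (h d : ℕ) : Set (Fin d → ℝ) := convexHull ℝ (castPt '' PhdVerts h d)

/-- `Σ_{2 ≤ j ≤ d-1} a_j`, the sum over the middle coordinates (integer version). -/
def midSumZ {d : ℕ} (a : Fin d → ℤ) : ℤ :=
  ∑ j ∈ Finset.univ.filter (fun j : Fin d => 0 < j.val ∧ j.val < d - 1), a j


/-!
Write `β = α - u₈ = (K, b + y, D)`, where `K = α₁ - 1`, `D = α_d - 5`, `b` is the smallest middle
coordinate of `α` and `y ≥ 0` is the excess of the middle coordinates over `b` (a scalar in the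
middle block stands for the constant vector). With `S = Σ yᵢ` and `W = n - α₁ - S` we have
`K + W + S = n - 1`, and `β` splits into `(K, A, l) ∈ K • P`, a combination of `u₇, u₈, u₉, u₁₀`;
`(0, b - A, L) ∈ W • P`, made from `0, u₂, …, u₆`; and `(0, y, t) ∈ S • P`, made from the
`vᵢ, vᵢ'`, where `L + l + t = D`. Eliminating `A, L, l, t` (Fourier–Motzkin) leaves six linear
inequalities, which are the hypotheses at the minimal middle coordinate, the strict ones sharpened
by integrality.
-/

section ConvexBudget

variable {E : Type*} [AddCommGroup E] [Module ℝ E] {C : Set E}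

theorem Convex.add_mem_smul (hC : Convex ℝ C) {r s : ℝ} (hr : 0 ≤ r) (hs : 0 ≤ s) {x y : E}
    (hx : x ∈ r • C) (hy : y ∈ s • C) : x + y ∈ (r + s) • C := by
  rw [hC.add_smul hr hs]
  exact Set.add_mem_add hx hy

theorem Convex.mem_smul_of_le (hC : Convex ℝ C) (h0 : (0 : E) ∈ C) {r s : ℝ} (hr : 0 ≤ r)
    (hrs : r ≤ s) {x : E} (hx : x ∈ r • C) : x ∈ s • C := by
  simpa using hC.add_mem_smul hr (sub_nonneg.2 hrs) hx (Set.smul_mem_smul_set (a := s - r) h0)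

theorem Convex.sum_smul_mem_smul (hC : Convex ℝ C) (hne : C.Nonempty) {ι : Type*}
    (s : Finset ι) {c : ι → ℝ} {v : ι → E} (hc : ∀ i ∈ s, 0 ≤ c i) (hv : ∀ i ∈ s, v i ∈ C) :
    ∑ i ∈ s, c i • v i ∈ (∑ i ∈ s, c i) • C := by
  classical
  induction s using Finset.induction_on with
  | empty => simp [Set.zero_smul_set hne]
  | insert i s hi ih =>
    rw [sum_insert hi, sum_insert hi]
    exact hC.add_mem_smul (hc i (mem_insert_self i s))
      (sum_nonneg fun j hj => hc j (mem_insert_of_mem hj))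
      (Set.smul_mem_smul_set (hv i (mem_insert_self i s)))
      (ih (fun j hj => hc j (mem_insert_of_mem hj)) fun j hj => hv j (mem_insert_of_mem hj))

theorem Convex.add_smul_mem_of_le (hC : Convex ℝ C) {x y : E} {t T : ℝ} (hx : x ∈ C)
    (hy : x + T • y ∈ C) (ht : 0 ≤ t) (htT : t ≤ T) : x + t • y ∈ C := by
  rcases htT.eq_or_lt with rfl | hT
  · exact hy
  have hT0 : 0 < T := ht.trans_lt hT
  have key := hC.add_smul_mem hx hy (t := t / T)
    ⟨div_nonneg ht hT0.le, (div_le_one hT0).2 hT.le⟩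
  rwa [smul_smul, div_mul_cancel₀ _ hT0.ne'] at key

theorem Convex.smul_add_smul_mem_smul_of_le (hC : Convex ℝ C) (h0 : (0 : E) ∈ C) {u v : E}
    {h : ℝ} (hh : 1 ≤ h) (hv : v ∈ C) (huv : h • (u + v) ∈ C)
    (huv' : (h - 1) • u + h • v ∈ C) {g L W : ℝ} (hg : 0 ≤ g) (hgL : g ≤ L) (hLg : L - g ≤ W)
    (hL : L ≤ h * W) : g • u + L • v ∈ W • C := by
  rcases le_or_gt ((h - 1) * L) (h * g) with hc | hc
  · have hh0 : 0 < h := by linarith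
    have hq : 0 ≤ (h * g - (h - 1) * L) / h := div_nonneg (sub_nonneg.2 hc) hh0.le
    have key := hC.add_mem_smul hq (sub_nonneg.2 hgL)
      (Set.smul_mem_smul_set huv) (Set.smul_mem_smul_set huv')
    have hsum : (h * g - (h - 1) * L) / h + (L - g) ≤ W := by
      rw [div_add' _ _ _ hh0.ne', div_le_iff₀ hh0]
      nlinarith
    convert hC.mem_smul_of_le h0 (add_nonneg hq (sub_nonneg.2 hgL)) hsum key using 1
    match_scalars <;> field_simp <;> ring
  · have hh1 : 0 < h - 1 := by nlinarith
    have hp : 0 ≤ ((h - 1) * L - h * g) / (h - 1) := div_nonneg (by linarith) hh1.le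
    have hr : 0 ≤ g / (h - 1) := div_nonneg hg hh1.le
    have key := hC.add_mem_smul hp hr (Set.smul_mem_smul_set hv) (Set.smul_mem_smul_set huv')
    have hsum : ((h - 1) * L - h * g) / (h - 1) + g / (h - 1) = L - g := by
      field_simp
      ring
    convert hC.mem_smul_of_le h0 (add_nonneg hp hr) (hsum.trans_le hLg) key using 1
    match_scalars
    · field_simp
    · field_simp
      ring

theorem Convex.smul_add_smul_add_smul_mem_smul (hC : Convex ℝ C) {e m f : E}
    (h1 : e + (4 : ℝ) • f ∈ C) (h2 : e + (5 : ℝ) • f ∈ C) (h3 : e + m ∈ C) (h4 : e + m + f ∈ C)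
    {K A l : ℝ} (hA : 0 ≤ A) (hAK : A ≤ K) (hl : 4 * (K - A) ≤ l) (hl' : l ≤ 5 * K - 4 * A) :
    K • e + A • m + l • f ∈ K • C := by
  have hKA : 0 ≤ K - A := sub_nonneg.2 hAK
  have hbase := hC.add_mem_smul hKA hA (Set.smul_mem_smul_set h1) (Set.smul_mem_smul_set h3)
  have htop := hC.add_mem_smul hKA hA (Set.smul_mem_smul_set h2) (Set.smul_mem_smul_set h4)
  rw [sub_add_cancel] at hbase htop
  have key := (hC.smul K).add_smul_mem_of_le hbase (T := K) (y := f)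
    (by convert htop using 1; module) (sub_nonneg.2 hl) (by linarith)
  convert key using 1
  module

end ConvexBudget

/- Fourier–Motzkin: each of `A` and `L` is the largest of its lower bounds, and `l` the smallest of
its upper bounds. -/
theorem exists_split_params {h K b D S W : ℝ} (hh : 1 ≤ h) (hK : 0 ≤ K) (hb : 0 ≤ b)
    (hD : 0 ≤ D) (hS : 0 ≤ S) (hW : 0 ≤ W) (h1 : b ≤ W + K + D) (h2 : 4 * K ≤ 4 * b + D)
    (h3 : D ≤ 5 * K + b + W + S) (h4 : b ≤ h * W + K) (h5 : D ≤ h * W + 5 * K + S)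
    (h6 : 4 * b + D ≤ 5 * h * W + 5 * K + S) :
    ∃ A L l t : ℝ, 0 ≤ A ∧ A ≤ K ∧ A ≤ b ∧ 4 * (K - A) ≤ l ∧ l ≤ 5 * K - 4 * A ∧
      0 ≤ L ∧ b - A - L ≤ W ∧ L - (b - A) ≤ W ∧ L ≤ h * W ∧ b - A ≤ h * W ∧
      0 ≤ t ∧ t ≤ S ∧ L + l + t = D := by
  have hhW : 0 ≤ h * W := mul_nonneg (by linarith) hW
  have hhW' : W ≤ h * W := le_mul_of_one_le_left hW hh
  set A := max (max 0 (K - D / 4)) (max ((4 * K + b - W - D) / 5) (b - h * W))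
  set L := max (max 0 (b - A - W)) (D - 5 * K + 4 * A - S)
  set l := min (5 * K - 4 * A) (D - L)
  have hA : 0 ≤ A ∧ K - D / 4 ≤ A ∧ (4 * K + b - W - D) / 5 ≤ A ∧ b - h * W ≤ A := by
    simp only [A, le_max_iff, le_refl, true_or, or_true, and_self]
  have hAK : A ≤ K := by simp only [A, max_le_iff]; refine ⟨⟨?_, ?_⟩, ?_, ?_⟩ <;> linarith
  have hAb : A ≤ b := by simp only [A, max_le_iff]; refine ⟨⟨?_, ?_⟩, ?_, ?_⟩ <;> linarith
  have hA4 : A ≤ (h * W + S + 5 * K - D) / 4 := by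
    simp only [A, max_le_iff]; refine ⟨⟨?_, ?_⟩, ?_, ?_⟩ <;> linarith
  have hA5 : A ≤ (W + b + S + 5 * K - D) / 5 := by
    simp only [A, max_le_iff]; refine ⟨⟨?_, ?_⟩, ?_, ?_⟩ <;> linarith
  have hL : 0 ≤ L ∧ b - A - W ≤ L ∧ D - 5 * K + 4 * A - S ≤ L := by
    simp only [L, le_max_iff, le_refl, true_or, or_true, and_self]
  have hLW : L ≤ h * W ∧ L ≤ W + b - A ∧ L ≤ D - 4 * (K - A) := by
    simp only [L, max_le_iff]
    refine ⟨⟨⟨?_, ?_⟩, ?_⟩, ⟨⟨?_, ?_⟩, ?_⟩, ⟨⟨?_, ?_⟩, ?_⟩⟩ <;> linarith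
  have hl : 4 * (K - A) ≤ l ∧ D - L - S ≤ l := by
    simp only [l, le_min_iff]; refine ⟨⟨?_, ?_⟩, ?_, ?_⟩ <;> linarith
  refine ⟨A, L, l, D - L - l, hA.1, hAK, hAb, hl.1, min_le_left _ _, hL.1, by linarith,
    by linarith, hLW.1, by linarith, by linarith [min_le_right (5 * K - 4 * A) (D - L)],
    by linarith, by ring⟩

section Coordinates

variable {d : ℕ}

theorem castPt_add (u v : Fin d → ℤ) : castPt (u + v) = castPt u + castPt v := by
  ext i; simp [castPt]

theorem castPt_sub (u v : Fin d → ℤ) : castPt (u - v) = castPt u - castPt v := by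
  ext i; simp [castPt]

theorem castPt_smul (c : ℤ) (u : Fin d → ℤ) : castPt (c • u) = (c : ℝ) • castPt u := by
  ext i; simp [castPt]

variable (d) in
def midIdx : Finset (Fin d) := univ.filter fun j : Fin d => 0 < j.val ∧ j.val < d - 1

variable (d) in
theorem card_midIdx : #(midIdx d) = d - 2 := by
  have hmap : (midIdx d).map Fin.valEmbedding = Ioo 0 (d - 1) := by
    ext x
    simp only [midIdx, mem_map, mem_filter, mem_univ, true_and, Fin.valEmbedding_apply, mem_Ioo]
    exact ⟨fun ⟨j, hj, hjx⟩ => hjx ▸ hj, fun hx => ⟨⟨x, by omega⟩, hx, rfl⟩⟩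
  rw [← card_map, hmap, Nat.card_Ioo]
  omega

theorem midSumZ_eq (hd : 2 ≤ d) (a : Fin d → ℤ) (b : ℤ) :
    midSumZ a = ∑ j ∈ midIdx d, (a j - b) + ((d : ℤ) - 2) * b := by
  rw [sum_sub_distrib, sum_const, card_midIdx, nsmul_eq_mul, Nat.cast_sub hd]
  simp [midSumZ, midIdx]

def midExcess (a : Fin d → ℤ) (b : ℤ) : Fin d → ℝ :=
  fun j => if j ∈ midIdx d then ((a j - b : ℤ) : ℝ) else 0

theorem midExcess_nonneg {a : Fin d → ℤ} {b : ℤ} (hb : ∀ j ∈ midIdx d, b ≤ a j) (j : Fin d) :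
    0 ≤ midExcess a b j := by
  by_cases hj : j ∈ midIdx d <;> simp [midExcess, hj, hb j]

theorem midExcess_of_notMem {a : Fin d → ℤ} {b : ℤ} {j : Fin d} (hj : j ∉ midIdx d) :
    midExcess a b j = 0 := by
  simp [midExcess, hj]

theorem sum_midExcess (a : Fin d → ℤ) (b : ℤ) :
    ∑ j, midExcess a b j = ((∑ j ∈ midIdx d, (a j - b) : ℤ) : ℝ) := by
  simp only [midExcess, sum_ite_mem, univ_inter, Int.cast_sum]

theorem castPt_eq_add_midExcess (hd : 2 ≤ d) (a : Fin d → ℤ) (b : ℤ) :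
    castPt a = (a ⟨0, by omega⟩ : ℝ) • castPt (eOne d) + (b : ℝ) • castPt (eMid d)
      + midExcess a b + (a ⟨d - 1, by omega⟩ : ℝ) • castPt (eD d) := by
  ext j
  have hmid : j ∈ midIdx d ↔ 0 < j.val ∧ j.val < d - 1 := by simp [midIdx]
  rcases (by omega : j.val = 0 ∨ j.val = d - 1 ∨ (0 < j.val ∧ j.val < d - 1)) with hj | hj | hj
  · have hd1 : (0 : ℕ) ≠ d - 1 := by omega
    have hk : a j = a ⟨0, by omega⟩ := congrArg a (Fin.ext hj)
    simp [castPt, eOne, eMid, eD, eV, midExcess, hmid, hj, hd1, hk]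
  · have hd1 : d - 1 ≠ 0 := by omega
    have he : a j = a ⟨d - 1, by omega⟩ := congrArg a (Fin.ext hj)
    simp [castPt, eOne, eMid, eD, eV, midExcess, hmid, hj, hd1, he]
  · simp [castPt, eOne, eMid, eD, eV, midExcess, hmid.2 hj, hj.1, hj.2, hj.1.ne', hj.2.ne]

end Coordinates

section Phd

variable {h d : ℕ}

theorem castPt_mem_Phd {v : Fin d → ℤ} {x : Fin d → ℝ} (hv : v ∈ PhdVerts h d)
    (hx : castPt v = x) : x ∈ Phd h d :=
  hx ▸ subset_convexHull ℝ _ (Set.mem_image_of_mem _ hv)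

theorem zero_mem_Phd : (0 : Fin d → ℝ) ∈ Phd h d :=
  castPt_mem_Phd (v := 0) (by simp [PhdVerts]) (by ext; simp [castPt])

theorem convex_Phd : Convex ℝ (Phd h d) := convex_convexHull ℝ _

theorem smul_eOne_add_smul_eMid_add_smul_eD_mem_smul_Phd {K A l : ℝ} (hA : 0 ≤ A)
    (hAK : A ≤ K) (hl : 4 * (K - A) ≤ l) (hl' : l ≤ 5 * K - 4 * A) :
    K • castPt (eOne d) + A • castPt (eMid d) + l • castPt (eD d) ∈ K • Phd h d :=
  convex_Phd.smul_add_smul_add_smul_mem_smul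
    (castPt_mem_Phd (v := eOne d + (4 : ℤ) • eD d) (by simp [PhdVerts])
      (by rw [castPt_add, castPt_smul]; norm_num))
    (castPt_mem_Phd (v := eOne d + (5 : ℤ) • eD d) (by simp [PhdVerts])
      (by rw [castPt_add, castPt_smul]; norm_num))
    (castPt_mem_Phd (v := eOne d + eMid d) (by simp [PhdVerts]) (castPt_add _ _))
    (castPt_mem_Phd (v := eOne d + eMid d + eD d) (by simp [PhdVerts])
      (by rw [castPt_add, castPt_add]))
    hA hAK hl hl'

theorem smul_eMid_add_smul_eD_mem_smul_Phd (hh : 1 ≤ h) {g L W : ℝ} (hg : 0 ≤ g)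
    (hL : 0 ≤ L) (hgL : g - L ≤ W) (hLg : L - g ≤ W) (hgW : g ≤ h * W) (hLW : L ≤ h * W) :
    g • castPt (eMid d) + L • castPt (eD d) ∈ W • Phd h d := by
  have hh' : (1 : ℝ) ≤ h := by exact_mod_cast hh
  have hEM : castPt (eMid d) ∈ Phd h d := castPt_mem_Phd (by simp [PhdVerts]) rfl
  have hED : castPt (eD d) ∈ Phd h d := castPt_mem_Phd (by simp [PhdVerts]) rfl
  have h4 : (h : ℝ) • (castPt (eMid d) + castPt (eD d)) ∈ Phd h d :=
    castPt_mem_Phd (v := (h : ℤ) • (eMid d + eD d)) (by simp [PhdVerts])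
      (by rw [castPt_smul, castPt_add]; norm_num)
  have h5 : ((h : ℝ) - 1) • castPt (eMid d) + (h : ℝ) • castPt (eD d) ∈ Phd h d :=
    castPt_mem_Phd (v := ((h : ℤ) - 1) • eMid d + (h : ℤ) • eD d) (by simp [PhdVerts])
      (by rw [castPt_add, castPt_smul, castPt_smul]; norm_num)
  have h6 : (h : ℝ) • castPt (eMid d) + ((h : ℝ) - 1) • castPt (eD d) ∈ Phd h d :=
    castPt_mem_Phd (v := (h : ℤ) • eMid d + ((h : ℤ) - 1) • eD d) (by simp [PhdVerts])
      (by rw [castPt_add, castPt_smul, castPt_smul]; norm_num)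
  rcases le_total g L with hle | hle
  · exact convex_Phd.smul_add_smul_mem_smul_of_le zero_mem_Phd hh' hED h4 h5 hg hle hLg hLW
  · rw [add_comm] at h4 h6 ⊢
    exact convex_Phd.smul_add_smul_mem_smul_of_le zero_mem_Phd hh' hEM h4 h6 hL hle hgL hgW

theorem add_smul_eD_mem_smul_Phd {y : Fin d → ℝ} (hy : ∀ j, 0 ≤ y j)
    (hsupp : ∀ j ∉ midIdx d, y j = 0) {t : ℝ} (ht : 0 ≤ t) (htS : t ≤ ∑ j, y j) :
    y + t • castPt (eD d) ∈ (∑ j, y j) • Phd h d := by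
  have hsum : ∑ j, y j = ∑ j ∈ midIdx d, y j :=
    (sum_subset (subset_univ _) fun j _ hj => hsupp j hj).symm
  have hexpand : y = ∑ j ∈ midIdx d, y j • castPt (eV d j) := by
    ext i
    by_cases hi : i ∈ midIdx d
    · simp [Finset.sum_apply, castPt, eV, Fin.val_inj, hi]
    · simp [Finset.sum_apply, castPt, eV, Fin.val_inj, hi, hsupp i hi]
  have hvert : ∀ j ∈ midIdx d, castPt (eV d j) ∈ Phd h d ∧
      castPt (eV d j) + castPt (eD d) ∈ Phd h d := by
    intro j hj
    simp only [midIdx, mem_filter, mem_univ, true_and] at hj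
    exact ⟨castPt_mem_Phd (Or.inr ⟨j, hj.1, hj.2, Or.inl rfl⟩) rfl,
      castPt_mem_Phd (Or.inr ⟨j, hj.1, hj.2, Or.inr rfl⟩) (castPt_add _ _)⟩
  have hbot := convex_Phd.sum_smul_mem_smul ⟨0, zero_mem_Phd⟩ (midIdx d)
    (fun j _ => hy j) fun j hj => (hvert j hj).1
  have htop := convex_Phd.sum_smul_mem_smul ⟨0, zero_mem_Phd⟩ (midIdx d)
    (fun j _ => hy j) fun j hj => (hvert j hj).2
  rw [← hexpand, ← hsum] at hbot
  simp only [smul_add, sum_add_distrib, ← sum_smul, ← hexpand, ← hsum] at htop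
  exact (convex_Phd.smul _).add_smul_mem_of_le hbot htop ht htS

theorem mem_smul_Phd_of_bounds (hh : 1 ≤ h) {K b D S W : ℝ} {y : Fin d → ℝ}
    (hy : ∀ j, 0 ≤ y j) (hsupp : ∀ j ∉ midIdx d, y j = 0) (hyS : ∑ j, y j = S) (hK : 0 ≤ K)
    (hb : 0 ≤ b) (hD : 0 ≤ D) (hW : 0 ≤ W) (h1 : b ≤ W + K + D) (h2 : 4 * K ≤ 4 * b + D)
    (h3 : D ≤ 5 * K + b + W + S) (h4 : b ≤ h * W + K) (h5 : D ≤ h * W + 5 * K + S)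
    (h6 : 4 * b + D ≤ 5 * h * W + 5 * K + S) :
    K • castPt (eOne d) + b • castPt (eMid d) + y + D • castPt (eD d) ∈ (K + W + S) • Phd h d := by
  have hS : 0 ≤ S := hyS ▸ sum_nonneg fun j _ => hy j
  obtain ⟨A, L, l, t, hA0, hAK, hAb, hl, hl', hL0, hgL, hLg, hLW, hgW, ht0, htS, hLlt⟩ :=
    exists_split_params (h := (h : ℝ)) (by exact_mod_cast hh) hK hb hD hS hW h1 h2 h3 h4 h5 h6
  have hKpart := smul_eOne_add_smul_eMid_add_smul_eD_mem_smul_Phd (h := h) (d := d)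
    hA0 hAK hl hl'
  have hWpart := smul_eMid_add_smul_eD_mem_smul_Phd (d := d) hh (g := b - A)
    (sub_nonneg.2 hAb) hL0 hgL hLg hgW hLW
  have hSpart := add_smul_eD_mem_smul_Phd (h := h) hy hsupp ht0 (hyS ▸ htS)
  rw [hyS] at hSpart
  convert convex_Phd.add_mem_smul (add_nonneg hK hW) hS
    (convex_Phd.add_mem_smul hK hW hKpart hWpart) hSpart using 1
  rw [← hLlt]
  module

end Phd

theorem stmt_18 (h d n : ℕ) (hh : 1 ≤ h) (hd : 3 ≤ d)
    (a : Fin d → ℤ)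
    (h0 : 0 < a ⟨0, by omega⟩)
    (hstrict : ∀ i : Fin d, 0 < i.val → i.val < d - 1 →
      0 < a i ∧
      -((d : ℤ) - 4) * a i + (midSumZ a - a i) - a ⟨d - 1, by omega⟩ < (n : ℤ) ∧
      4 * a ⟨0, by omega⟩ - 4 * a i - a ⟨d - 1, by omega⟩ < 0 ∧
      -4 * a ⟨0, by omega⟩ - a i + a ⟨d - 1, by omega⟩ < (n : ℤ) ∧
      a ⟨0, by omega⟩ - ((d : ℤ) - 3) * a i + (midSumZ a - a i) < (n : ℤ) ∧
      (5 * (h : ℤ) - 5) * a ⟨0, by omega⟩ - (((d : ℤ) - 3) * (5 * (h : ℤ) - 1) - 4) * a i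
        + (5 * (h : ℤ) - 1) * (midSumZ a - a i) + a ⟨d - 1, by omega⟩ < 5 * (h : ℤ) * n ∧
      ((h : ℤ) - 5) * a ⟨0, by omega⟩ - ((d : ℤ) - 3) * ((h : ℤ) - 1) * a i
        + ((h : ℤ) - 1) * (midSumZ a - a i) + a ⟨d - 1, by omega⟩ < (h : ℤ) * n ∧
      ((h : ℤ) - 1) * a ⟨0, by omega⟩ - (((d : ℤ) - 3) * (h : ℤ) - 1) * a i
        + (h : ℤ) * (midSumZ a - a i) < (h : ℤ) * n)
    (hd5 : 5 ≤ a ⟨d - 1, by omega⟩)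
    (hcond : ∀ i : Fin d, 0 < i.val → i.val < d - 1 →
      -((d : ℤ) - 4) * a i + (midSumZ a - a i) - a ⟨d - 1, by omega⟩ ≤ (n : ℤ) - 6) :
    castPt (a - (eOne d + (5 : ℤ) • eD d)) ∈ ((n : ℝ) - 1) • Phd h d := by
  obtain ⟨i, hi, hmin⟩ := (midIdx d).exists_min_image a
    ⟨⟨1, by omega⟩, by simp only [midIdx, mem_filter, mem_univ, true_and]; omega⟩
  rw [castPt_sub, castPt_add, castPt_smul, castPt_eq_add_midExcess (by omega) a (a i)]
  set k := a ⟨0, by omega⟩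
  set e := a ⟨d - 1, by omega⟩
  have hi' : 0 < i.val ∧ i.val < d - 1 := by simpa [midIdx] using hi
  obtain ⟨hb, -, hB, hC, hD, hF, hG, hH⟩ := hstrict i hi'.1 hi'.2
  have hA := hcond i hi'.1 hi'.2
  set S := ∑ j ∈ midIdx d, (a j - a i)
  rw [midSumZ_eq (by omega) a (a i)] at hA hD hF hG hH
  have key := mem_smul_Phd_of_bounds (d := d) hh (K := k - 1) (b := a i) (D := e - 5)
    (W := n - k - S) (midExcess_nonneg hmin) (fun _ => midExcess_of_notMem) (sum_midExcess a (a i))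
    (by exact_mod_cast (by omega : (0 : ℤ) ≤ k - 1)) (by exact_mod_cast hb.le)
    (by exact_mod_cast (by omega : (0 : ℤ) ≤ e - 5))
    (by exact_mod_cast (by linarith : (0 : ℤ) ≤ n - k - S))
    (by exact_mod_cast (by linear_combination hA : a i ≤ n - k - S + (k - 1) + (e - 5)))
    (by exact_mod_cast (by linarith : 4 * (k - 1) ≤ 4 * a i + (e - 5)))
    (by exact_mod_cast (by linarith : e - 5 ≤ 5 * (k - 1) + a i + (n - k - S) + S))
    (by exact_mod_cast (by linear_combination Int.add_one_le_of_lt hH :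
      a i ≤ h * (n - k - S) + (k - 1)))
    (by exact_mod_cast (by linear_combination Int.add_one_le_of_lt hG :
      e - 5 ≤ h * (n - k - S) + 5 * (k - 1) + S))
    (by exact_mod_cast (by linear_combination Int.add_one_le_of_lt hF :
      4 * a i + (e - 5) ≤ 5 * h * (n - k - S) + 5 * (k - 1) + S))
  rw [show (n : ℝ) - 1 = k - 1 + (n - k - S) + S by ring]
  convert key using 1
  push_cast
  module
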